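/- arXiv:2605.22750 — 5 statements merged into one kernel-verified Lean document; each statement's English description precedes it below -/
import Mathlib

section
/- For every i ≥ 1 and every f ∈ R, the variable x_i divides the polynomial R_{i+1} f − R_i f (so the quasisymmetric divided difference T_i f, the unique polynomial with x_i · (T_i f) = R_{i+1} f − R_i f, is well defined). -/
open MvPolynomial

/-- The ambient ring `R = ℤ[x₁, x₂, …]`, with variables indexed by positive integers. -/
abbrev MyR : Type := MvPolynomial ℕ+ ℤ

/-- The Bergeron–Sottile operator `R_i`: the `ℤ`-algebra map with
`x_j ↦ x_j` for `j < i`, `x_i ↦ 0`, and `x_j ↦ x_{j-1}` for `j > i`. -/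
noncomputable def BS (i : ℕ+) : MyR →ₐ[ℤ] MyR :=
  aeval fun j : ℕ+ =>
    if j < i then (X j : MyR) else if j = i then 0 else X (j - 1)

/-- Plane binary trees. -/
inductive BTree : Type
  | leaf : BTree
  | node : BTree → BTree → BTree
  deriving DecidableEq

namespace BTree

def numLeaves : BTree → ℕ+
  | leaf => 1
  | node l r => l.numLeaves + r.numLeaves

/-- Number of internal nodes. -/
def size : BTree → ℕ
  | leaf => 0
  | node l r => l.size + r.size + 1

/-- `qdesSet T a` : the QDes positions contributed by a tree `T` whose leftmost
leaf carries the label `a` (leaves are labeled consecutively left-to-right). -/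
def qdesSet : BTree → ℕ+ → Set ℕ+
  | leaf, _ => ∅
  | node leaf leaf, a => {a}
  | node l r, a => l.qdesSet a ∪ r.qdesSet (a + l.numLeaves)

/-- `trim T a i` : replace the terminal node whose leaf-children are labeled
`i`, `i+1` by a single leaf (`a` = label of the leftmost leaf of `T`). -/
def trim : BTree → ℕ+ → ℕ+ → BTree
  | leaf, _, _ => leaf
  | node l r, a, i =>
    if l = leaf ∧ r = leaf ∧ a = i then leaf
    else node (l.trim a i) (r.trim (a + l.numLeaves) i)

/-- `rightAt T a i = true` iff the terminal node of `T` whose leaf-children are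
labeled `i`, `i+1` is the right child of its parent. -/
def rightAt : BTree → ℕ+ → ℕ+ → Bool
  | leaf, _, _ => false
  | node l r, a, i =>
    l.rightAt a i || r.rightAt (a + l.numLeaves) i ||
      (decide (r = node leaf leaf) && decide (a + l.numLeaves = i))

end BTree

/-- An indexed forest: a sequence of plane binary trees, all but finitely many
of which are the single leaf. -/
structure IndexedForest : Type where
  trees : ℕ → BTree
  finite : {n : ℕ | trees n ≠ BTree.leaf}.Finite

namespace IndexedForest

noncomputable def supp (F : IndexedForest) : Finset ℕ := F.finite.toFinset

/-- `|F|`, the number of internal nodes of `F`. -/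
noncomputable def size (F : IndexedForest) : ℕ := ∑ n ∈ F.supp, (F.trees n).size

/-- The label of the leftmost leaf of the `n`-th tree (trees indexed from `0`;
leaves are labeled `1, 2, 3, …` from left to right across the trees). -/
def firstLeaf (F : IndexedForest) (n : ℕ) : ℕ+ :=
  ⟨1 + ∑ m ∈ Finset.range n, ((F.trees m).numLeaves : ℕ), by omega⟩

/-- `QDes(F)`. -/
def qdes (F : IndexedForest) : Set ℕ+ :=
  ⋃ n : ℕ, (F.trees n).qdesSet (F.firstLeaf n)

/-- `F/i`, the forest obtained by replacing the terminal node with leaf-children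
`i`, `i+1` by a single leaf. -/
def trim (F : IndexedForest) (i : ℕ+) : IndexedForest where
  trees := fun n => (F.trees n).trim (F.firstLeaf n) i
  finite := F.finite.subset (fun n hn => by
    simp only [Set.mem_setOf_eq] at hn ⊢
    intro h
    apply hn
    rw [h]
    rfl)

/-- The empty forest `∅`. -/
protected def empty : IndexedForest :=
  ⟨fun _ => BTree.leaf, Set.finite_empty.subset (fun _ hn => (hn rfl).elim)⟩

/-- The terminal node of `F` at `i ∈ QDes F` is a right child. -/
def rightAt (F : IndexedForest) (i : ℕ+) : Prop :=
  ∃ n : ℕ, (F.trees n).rightAt (F.firstLeaf n) i = true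

open Classical in
/-- `min QDes(F)` (defaulting to `1` if `QDes(F)` is empty, i.e. `F = ∅`). -/
noncomputable def minQDes (F : IndexedForest) : ℕ+ :=
  if h : ((fun i : ℕ+ => (i : ℕ)) '' F.qdes).Nonempty then
    ⟨sInf ((fun i : ℕ+ => (i : ℕ)) '' F.qdes), by
      obtain ⟨i, _, hieq⟩ := Nat.sInf_mem h
      exact hieq ▸ i.2⟩
  else 1

end IndexedForest

/-- Set-valued labeled plane binary trees: each internal node carries a finite
set of positive integers. -/
inductive LTree : Type
  | leaf : LTree
  | node : Finset ℕ+ → LTree → LTree → LTree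

namespace LTree

/-- Underlying unlabeled tree. -/
def shape : LTree → BTree
  | leaf => BTree.leaf
  | node _ l r => BTree.node l.shape r.shape

/-- The label set of the top of a subtree; a leaf with label `a` counts as the
singleton `{a}`. -/
def headSet : LTree → ℕ+ → Finset ℕ+
  | leaf, a => {a}
  | node S _ _, _ => S

/-- Compatibility of a set-valued labeling: every label set is nonempty,
`max κ(v) ≤ min κ(v_L)` and `max κ(v) < min κ(v_R)`.  The parameter `a` is the
label of the leftmost leaf of the subtree. -/
def Compatible : LTree → ℕ+ → Prop
  | leaf, _ => True
  | node S l r, a =>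
    S.Nonempty ∧ l.Compatible a ∧ r.Compatible (a + l.shape.numLeaves) ∧
    (∀ s ∈ S, ∀ t ∈ l.headSet a, s ≤ t) ∧
    (∀ s ∈ S, ∀ t ∈ r.headSet (a + l.shape.numLeaves), s < t)

/-- The monomial `x_κ` contributed by a labeled tree. -/
noncomputable def weight : LTree → MyR
  | leaf => 1
  | node S l r => (∏ j ∈ S, (X j : MyR)) * l.weight * r.weight

/-- `|κ|`, the total cardinality of the label sets. -/
def lsize : LTree → ℕ
  | leaf => 0
  | node S l r => S.card + l.lsize + r.lsize

/-- All label sets are singletons. -/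
def allSingle : LTree → Prop
  | leaf => True
  | node S l r => S.card = 1 ∧ l.allSingle ∧ r.allSingle

end LTree

/-- The type of compatible set-valued labelings of the indexed forest `F`. -/
def IndexedForest.Labelings (F : IndexedForest) : Type :=
  {κ : ℕ → LTree //
    (∀ n, (κ n).shape = F.trees n) ∧ ∀ n, (κ n).Compatible (F.firstLeaf n)}

/-- The grove polynomial `G_F^{(β)} = Σ_κ β^{|κ|-|F|} x_κ`. -/
noncomputable def groveP (β : ℤ) (F : IndexedForest) : MyR :=
  ∑ᶠ κ : F.Labelings,
    C (β ^ ((∑ n ∈ F.supp, (κ.1 n).lsize) - F.size)) * ∏ n ∈ F.supp, (κ.1 n).weight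

/-- The forest polynomial `𝔓_F`: the sum of `x_κ` over compatible set-valued
labelings all of whose label sets are singletons. -/
noncomputable def forestPoly (F : IndexedForest) : MyR :=
  ∑ᶠ κ : {κ : F.Labelings // ∀ n, (κ.1 n).allSingle},
    ∏ n ∈ F.supp, (κ.1.1 n).weight

open Classical in
/-- Fuel-indexed recursion implementing the grove extractor. -/
noncomputable def extractAux (T : ℕ+ → MyR → MyR) (β : ℤ) :
    ℕ → IndexedForest → MyR → MyR
  | 0, _, f => f
  | k + 1, F, f =>
    if F = IndexedForest.empty then f
    else
      extractAux T β k (F.trim F.minQDes)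
        (if F.rightAt F.minQDes then (1 + C β * X F.minQDes) * T F.minQDes f
         else T F.minQDes f)

/-- The grove extractor `Ĥ_F`: `Ĥ_∅ = id`, and for `F ≠ ∅` and `i = min QDes F`,
`Ĥ_F = Ĥ_{F/i} ∘ Ĥ^R_i` if the terminal node at `i` is a right child and
`Ĥ_F = Ĥ_{F/i} ∘ Ĥ^L_i` otherwise, where `Ĥ^L_i = T_i` and
`Ĥ^R_i = (1 + βx_i)·T_i`.  (The recursion is implemented with fuel `|F|`, using
that `|F/i| = |F| - 1`.) -/
noncomputable def extract (T : ℕ+ → MyR → MyR) (β : ℤ) (F : IndexedForest) :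
    MyR → MyR :=
  extractAux T β F.size F

/-- `S_∞`: permutations of `{1, 2, …}` fixing all but finitely many points. -/
def SPerm : Type := {w : Equiv.Perm ℕ+ // {x : ℕ+ | w x ≠ x}.Finite}

namespace SPerm

/-- The identity permutation. -/
protected def one : SPerm :=
  ⟨1, Set.finite_empty.subset (fun _ hx => (hx rfl).elim)⟩

/-- `w * s_i` where `s_i` is the transposition of `i` and `i+1`. -/
noncomputable def mulSwap (w : SPerm) (i : ℕ+) : SPerm :=
  ⟨w.1 * Equiv.swap i (i + 1), by
    apply ((w.2.union (Set.finite_singleton i)).union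
      (Set.finite_singleton (i + 1))).subset
    intro x hx
    simp only [Set.mem_setOf_eq, Equiv.Perm.mul_apply] at hx
    simp only [Set.mem_union, Set.mem_setOf_eq, Set.mem_singleton_iff]
    by_cases h1 : x = i
    · exact Or.inl (Or.inr h1)
    by_cases h2 : x = i + 1
    · exact Or.inr h2
    · exact Or.inl (Or.inl (by rwa [Equiv.swap_apply_of_ne_of_ne h1 h2] at hx))⟩

/-- `ℓ(w)`, the number of inversions. -/
noncomputable def len (w : SPerm) : ℕ :=
  Set.ncard {p : ℕ+ × ℕ+ | p.1 < p.2 ∧ w.1 p.2 < w.1 p.1}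

/-- `Des(w) = {i ≥ 1 : w(i) > w(i+1)}`. -/
def des (w : SPerm) : Set ℕ+ := {i : ℕ+ | w.1 (i + 1) < w.1 i}

end SPerm

/-- `f` is quasisymmetric in `x₁, …, xₙ`: no variable `x_j` with `j > n`
occurs, and coefficients of monomials with the same exponent word on strictly
increasing variable sequences in `{1, …, n}` agree. -/
def IsQuasisym (n : ℕ+) (f : MyR) : Prop :=
  (∀ j : ℕ+, n < j → ∀ m ∈ f.support, m j = 0) ∧
  ∀ k : ℕ, 0 < k → ∀ a : Fin k → ℕ+, ∀ u v : Fin k → ℕ+,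
    StrictMono u → StrictMono v → (∀ m, u m ≤ n) → (∀ m, v m ≤ n) →
    coeff (∑ m, Finsupp.single (u m) ((a m : ℕ))) f =
      coeff (∑ m, Finsupp.single (v m) ((a m : ℕ))) f

/-- The zigzag (chain) tree encoded by a list of booleans: the internal nodes
form a chain `v₁, …, v_k` (`k` = length + 1) and the `m`-th entry records
whether `v_{m+1}` is the right child of `v_m`. -/
def chainTree : List Bool → BTree
  | [] => BTree.node BTree.leaf BTree.leaf
  | b :: rest =>
    if b then BTree.node BTree.leaf (chainTree rest)
    else BTree.node (chainTree rest) BTree.leaf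

lemma BS_X_key (i j : ℕ+) : (X i : MyR) ∣ BS (i + 1) (X j) - BS i (X j) := by
  have hlt : ∀ k : ℕ+, k < k + 1 := fun k => PNat.lt_add_right k 1
  have hsub : ∀ k : ℕ+, k + 1 - 1 = k := fun k => by
    apply PNat.coe_injective
    rw [PNat.sub_coe, if_pos (PNat.lt_add_left 1 k)]
    simp
  simp only [BS, aeval_X]
  rcases lt_trichotomy j i with h | h | h
  · rw [if_pos (h.trans (hlt i)), if_pos h, sub_self]
    exact dvd_zero _
  · subst h
    rw [if_pos (hlt j), if_neg (lt_irrefl j), if_pos rfl, sub_zero]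
  · rcases eq_or_lt_of_le (PNat.add_one_le_iff.mpr h) with h2 | h2
    · rw [if_neg (by simp [h2]), if_pos h2.symm, if_neg (not_lt_of_gt h),
        if_neg (ne_of_gt h), zero_sub, ← h2, hsub]
      exact (dvd_refl _).neg_right
    · rw [if_neg (not_lt_of_gt h2), if_neg (ne_of_gt h2),
        if_neg (not_lt_of_gt h), if_neg (ne_of_gt h), sub_self]
      exact dvd_zero _

/-- for every `i ≥ 1` and every `f ∈ R`, the variable `x_i`
divides `R_{i+1} f - R_i f`. -/
theorem stmt0 (i : ℕ+) (f : MyR) :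
    (X i : MyR) ∣ BS (i + 1) f - BS i f := by
  induction f using MvPolynomial.induction_on with
  | C a => simp [AlgHom.commutes]
  | add p q hp hq =>
    rw [map_add, map_add, show BS (i+1) p + BS (i+1) q - (BS i p + BS i q)
      = (BS (i+1) p - BS i p) + (BS (i+1) q - BS i q) by ring]
    exact dvd_add hp hq
  | mul_X p j hp =>
    have : BS (i+1) (p * X j) - BS i (p * X j)
        = BS (i+1) p * (BS (i+1) (X j) - BS i (X j))
          + (BS (i+1) p - BS i p) * BS i (X j) := by
      rw [map_mul, map_mul]; ring
    rw [this]
    exact dvd_add ((BS_X_key i j).mul_left _) (hp.mul_right _)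
end

section
/- For every f ∈ R: (a) R_i(R_j f) = R_j(R_{i+1} f) whenever i ≥ j ≥ 1; and (b) T_i(T_j f) = T_j(T_{i+1} f) whenever i > j ≥ 1 (the Thompson monoid relations for the quasisymmetric divided differences). -/
open MvPolynomial

lemma BS_X_lt {i k : ℕ+} (h : k < i) : BS i (X k) = X k := by
  simp [BS, h]
lemma BS_X_eq (i : ℕ+) : BS i (X i) = 0 := by
  simp [BS]
lemma BS_X_gt {i k : ℕ+} (h : i < k) : BS i (X k) = X (k - 1) := by
  simp [BS, not_lt_of_gt h, ne_of_gt h]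

lemma pnat_sub_one_coe {b : ℕ+} (h : 1 < b) : ((b - 1 : ℕ+) : ℕ) = (b : ℕ) - 1 := by
  rw [PNat.sub_coe, if_pos h, PNat.one_coe]

lemma pnat_add_one_sub_one (i : ℕ+) : (i + 1 : ℕ+) - 1 = i := by
  apply PNat.coe_injective
  rw [pnat_sub_one_coe (PNat.lt_add_left 1 i)]
  push_cast; omega

lemma BS_comp {i j : ℕ+} (h : j ≤ i) : (BS i).comp (BS j) = (BS j).comp (BS (i+1)) := by
  have hji : (j : ℕ) ≤ (i : ℕ) := h
  apply algHom_ext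
  intro k
  simp only [AlgHom.comp_apply]
  rcases lt_trichotomy k j with h1 | h1 | h1
  · rw [BS_X_lt h1, BS_X_lt (h1.trans_le h), BS_X_lt (show k < i+1 by
      rw [← PNat.coe_lt_coe]; push_cast; have : (k:ℕ) < j := h1; omega), BS_X_lt h1]
  · subst h1
    rw [BS_X_eq, map_zero, BS_X_lt (show k < i+1 by
      rw [← PNat.coe_lt_coe]; push_cast; omega), BS_X_eq]
  · have hk : (j : ℕ) < (k : ℕ) := h1
    have hk1 : 1 < k := lt_of_le_of_lt j.one_le h1
    have hs : ((k - 1 : ℕ+) : ℕ) = (k : ℕ) - 1 := pnat_sub_one_coe hk1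
    rw [BS_X_gt h1]
    rcases lt_trichotomy k (i+1) with h2 | h2 | h2
    · have hk2 : (k : ℕ) < (i : ℕ) + 1 := by rw [← PNat.coe_lt_coe] at h2; push_cast at h2; omega
      rw [BS_X_lt (show k - 1 < i by rw [← PNat.coe_lt_coe, hs]; omega),
        BS_X_lt h2, BS_X_gt h1]
    · rw [h2, pnat_add_one_sub_one, BS_X_eq, BS_X_eq, map_zero]
    · have hk2 : (i : ℕ) + 1 < (k : ℕ) := by rw [← PNat.coe_lt_coe] at h2; push_cast at h2; omega
      rw [BS_X_gt (show i < k - 1 by rw [← PNat.coe_lt_coe, hs]; omega),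
        BS_X_gt h2, BS_X_gt (show j < k - 1 by rw [← PNat.coe_lt_coe, hs]; omega)]

/-- the Thompson monoid relations
`R_i R_j = R_j R_(i+1)` for `i ≥ j ≥ 1` and `T_i T_j = T_j T_(i+1)` for
`i > j ≥ 1`, where `T` is the quasisymmetric divided difference, i.e. the
(unique) family with `x_i · T_i f = R_(i+1) f - R_i f`. -/
theorem stmt1 (T : ℕ+ → MyR → MyR)
    (hT : ∀ (i : ℕ+) (f : MyR), (X i : MyR) * T i f = BS (i + 1) f - BS i f)
    (f : MyR) :
    (∀ i j : ℕ+, j ≤ i → BS i (BS j f) = BS j (BS (i + 1) f)) ∧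
    (∀ i j : ℕ+, j < i → T i (T j f) = T j (T (i + 1) f)) := by
  have hcomm : ∀ i j : ℕ+, j ≤ i → ∀ g : MyR, BS i (BS j g) = BS j (BS (i+1) g) :=
    fun i j h g => AlgHom.congr_fun (BS_comp h) g
  refine ⟨fun i j h => hcomm i j h f, fun i j hij => ?_⟩
  apply mul_left_cancel₀ (X_ne_zero i : (X i : MyR) ≠ 0)
  apply mul_left_cancel₀ (X_ne_zero j : (X j : MyR) ≠ 0)
  have hji1 : j < i + 1 := hij.trans (by rw [← PNat.coe_lt_coe]; push_cast; omega)
  have hji2 : j + 1 < i + 1 := by rw [← PNat.coe_lt_coe]; push_cast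
                                  have : (j:ℕ) < i := hij; omega
  -- LHS
  have L : (X j : MyR) * ((X i : MyR) * T i (T j f))
      = BS (i+1) (BS (j+1) f) - BS (i+1) (BS j f) - (BS i (BS (j+1) f) - BS i (BS j f)) := by
    rw [hT i (T j f), mul_sub]
    have e1 : (X j : MyR) * BS (i+1) (T j f) = BS (i+1) (BS (j+1) f) - BS (i+1) (BS j f) := by
      have := congrArg (BS (i+1)) (hT j f)
      rw [map_mul, BS_X_lt hji1, map_sub] at this
      exact this
    have e2 : (X j : MyR) * BS i (T j f) = BS i (BS (j+1) f) - BS i (BS j f) := by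
      have := congrArg (BS i) (hT j f)
      rw [map_mul, BS_X_lt hij, map_sub] at this
      exact this
    rw [e1, e2]
  have R : (X j : MyR) * ((X i : MyR) * T j (T (i+1) f))
      = BS (j+1) (BS (i+1+1) f) - BS (j+1) (BS (i+1) f)
        - (BS j (BS (i+1+1) f) - BS j (BS (i+1) f)) := by
    rw [mul_left_comm, hT j (T (i+1) f), mul_sub]
    have e1 : (X i : MyR) * BS (j+1) (T (i+1) f)
        = BS (j+1) (BS (i+1+1) f) - BS (j+1) (BS (i+1) f) := by
      have := congrArg (BS (j+1)) (hT (i+1) f)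
      rw [map_mul, BS_X_gt hji2, pnat_add_one_sub_one, map_sub] at this
      exact this
    have e2 : (X i : MyR) * BS j (T (i+1) f)
        = BS j (BS (i+1+1) f) - BS j (BS (i+1) f) := by
      have := congrArg (BS j) (hT (i+1) f)
      rw [map_mul, BS_X_gt (hij.trans (by rw [← PNat.coe_lt_coe]; push_cast; omega)),
        pnat_add_one_sub_one, map_sub] at this
      exact this
    rw [e1, e2]
  rw [L, R, hcomm (i+1) (j+1) (by rw [← PNat.coe_le_coe]; push_cast; have : (j:ℕ) < i := hij; omega) f,
    hcomm (i+1) j (hji1.le) f,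
    hcomm i (j+1) (by rw [← PNat.coe_le_coe]; push_cast; have : (j:ℕ) < i := hij; omega) f,
    hcomm i j hij.le f]
  ring
end

section
/- For every β ∈ ℤ, every i ≥ 1 and every f ∈ R: T_i((1 + βx_{i+1}) · f) = T_i f − β · R_i f. (That is, the operator π̃_i = T_i ∘ (multiplication by 1 + βx_{i+1}) equals T_i − β R_i.) -/
open MvPolynomial

/-- `T_i((1 + βx_(i+1))·f) = T_i f - β·R_i f`. -/
theorem stmt2 (β : ℤ) (T : ℕ+ → MyR → MyR)
    (hT : ∀ (i : ℕ+) (f : MyR), (X i : MyR) * T i f = BS (i + 1) f - BS i f)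
    (i : ℕ+) (f : MyR) :
    T i ((1 + C β * X (i + 1)) * f) = T i f - C β * BS i f := by
  have hX : (X i : MyR) ≠ 0 := X_ne_zero i
  apply mul_left_cancel₀ hX
  rw [hT]
  have hC : ∀ j : ℕ+, BS j (C β) = C β := fun j => by
    simpa using (BS j).commutes β
  have e1 : BS (i + 1) ((1 + C β * X (i + 1)) * f) = BS (i + 1) f := by
    have hx : BS (i + 1) (X (i + 1)) = 0 := by simp [BS]
    rw [map_mul, map_add, map_one, map_mul, hx, hC]
    ring
  have e2 : BS i ((1 + C β * X (i + 1)) * f) = (1 + C β * X i) * BS i f := by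
    have hx : BS i (X (i + 1)) = X i := by
      have h1 : ¬ (i + 1 < i) := not_lt.mpr (PNat.lt_add_right i 1).le
      have h2 : i + 1 ≠ i := ne_of_gt (PNat.lt_add_right i 1)
      have h3 : i + 1 - 1 = i := by
        apply PNat.eq; simp [PNat.sub_coe, PNat.lt_add_left]
      simp [BS, h1, h2, h3]
    rw [map_mul, map_add, map_one, map_mul, hx, hC]
  rw [e1, e2, mul_sub, hT]
  ring
end

section
/- Set β = 1. For every indexed forest F and every i ≥ 1, there exist finitely many triples (c_1, w_1, G_1), …, (c_N, w_N, G_N), where each c_m ∈ ℤ, each w_m is a finite list of positive integers, and each G_m ∈ For, such that for every f ∈ R: Ĥ_F(R_i f) = Σ_{m=1}^N c_m · R_{w_m}(Ĥ_{G_m} f), where for a list w = (w(1), …, w(t)) the operator R_w denotes the composite R_{w(1)} ∘ ⋯ ∘ R_{w(t)}. In particular, ct(Ĥ_F(R_i f)) = Σ_{m=1}^N c_m · ct(Ĥ_{G_m} f) for every f ∈ R. -/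
open MvPolynomial

/-!
Write `Ĥ_F = Ĥ_{F/j} ∘ Ĥ^s_j` with `j = min QDes F` and induct on `|F|`. The step operators
commute past the `R_i` up to an index shift (`Ĥ_j R_{i+1} = R_i Ĥ_j` for `j < i`,
`Ĥ_j R_i = R_i Ĥ_{j+1}` for `i ≤ j`, `Ĥ_j R_{j+1} = R_{j+1} Ĥ_j + R_j Ĥ_{j+1}`), so it suffices
that every `Ĥ_G ∘ Ĥ^s_p` lies in the `ℤ`-span of the `R_w ∘ Ĥ_K` with `|K| ≤ |G| + 1`. This goes
by strong induction on `p`. If some `q ∈ QDes G` has `q + 1 < p`, then `Ĥ^s_p` commutes with the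
first step `Ĥ_b` of `Ĥ_G` and becomes `Ĥ^s_{p-1}`. Otherwise, splitting the leaf `p` of `G` into a
terminal node gives a forest `G'` with `min QDes G' = p` and `G'/p = G`, so
`Ĥ_{G'} = Ĥ_G ∘ Ĥ^{s'}_p`, and `Ĥ^R_p - Ĥ^L_p = R_{p+1} - R_p` absorbs the case `s ≠ s'`.
The constant-term identity follows because `ct ∘ R_i = ct`.
-/

theorem BS_X (i j : ℕ+) :
    BS i (X j) = if j < i then (X j : MyR) else if j = i then 0 else X (j - 1) := by
  simp [BS]

theorem BS_X_of_lt {i j : ℕ+} (h : j < i) : BS i (X j) = X j := by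
  rw [BS_X, if_pos h]

theorem BS_X_succ_of_le {i j : ℕ+} (h : i ≤ j) : BS i (X (j + 1)) = X j := by
  rw [BS_X, if_neg (by pnat_to_nat; omega), if_neg (by pnat_to_nat; omega), PNat.add_sub]

theorem BS_BS_succ_of_le {k i : ℕ+} (h : k ≤ i) (f : MyR) :
    BS k (BS (i + 1) f) = BS i (BS k f) := by
  suffices (BS k).comp (BS (i + 1)) = (BS i).comp (BS k) from DFunLike.congr_fun this f
  refine MvPolynomial.algHom_ext fun j => ?_
  simp only [AlgHom.comp_apply, BS_X]
  split_ifs <;> simp only [map_zero, BS_X] <;> split_ifs <;>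
    first | rfl | (exfalso; pnat_to_nat; omega)

theorem constantCoeff_BS (i : ℕ+) (f : MyR) : constantCoeff (BS i f) = constantCoeff f := by
  suffices (constantCoeff : MyR →+* ℤ).comp (BS i).toRingHom = constantCoeff from
    DFunLike.congr_fun this f
  refine MvPolynomial.ringHom_ext (fun _ => by simp) fun j => ?_
  rw [RingHom.comp_apply, AlgHom.toRingHom_eq_coe, RingHom.coe_coe, BS_X]
  split_ifs <;> simp

def IsDividedDifference (T : ℕ+ → MyR → MyR) : Prop :=
  ∀ (i : ℕ+) (f : MyR), (X i : MyR) * T i f = BS (i + 1) f - BS i f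

/-- `Ĥ^R_j` when `isRight`, `Ĥ^L_j` otherwise. -/
noncomputable def extractStep (T : ℕ+ → MyR → MyR) (isRight : Bool) (j : ℕ+) (f : MyR) : MyR :=
  if isRight then (1 + X j) * T j f else T j f

namespace IsDividedDifference

variable {T : ℕ+ → MyR → MyR} (hT : IsDividedDifference T)
include hT

theorem apply_add (j : ℕ+) (f g : MyR) : T j (f + g) = T j f + T j g :=
  mul_left_cancel₀ (X_ne_zero j) <| by rw [mul_add, hT, hT, hT, map_add, map_add]; ring

theorem apply_sub (j : ℕ+) (f g : MyR) : T j (f - g) = T j f - T j g :=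
  eq_sub_of_add_eq <| by rw [← hT.apply_add, sub_add_cancel]

theorem mul_left {j : ℕ+} {a c : MyR} (h₁ : BS (j + 1) a = c) (h₀ : BS j a = c) (g : MyR) :
    T j (a * g) = c * T j g :=
  mul_left_cancel₀ (X_ne_zero j) <| by rw [hT, map_mul, map_mul, h₁, h₀, mul_left_comm, hT, mul_sub]

theorem comp_BS_succ {j i : ℕ+} (h : j + 1 ≤ i) (f : MyR) :
    T j (BS (i + 1) f) = BS i (T j f) :=
  mul_left_cancel₀ (X_ne_zero j) <| by
    rw [hT, BS_BS_succ_of_le h, BS_BS_succ_of_le ((PNat.lt_add_right j 1).le.trans h),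
      ← map_sub, ← hT, map_mul, BS_X_of_lt (lt_of_lt_of_le (PNat.lt_add_right j 1) h)]

theorem comp_BS_of_le {i j : ℕ+} (h : i ≤ j) (f : MyR) :
    T j (BS i f) = BS i (T (j + 1) f) :=
  mul_left_cancel₀ (X_ne_zero j) <| by
    rw [hT, ← BS_BS_succ_of_le (h.trans (PNat.lt_add_right j 1).le), ← BS_BS_succ_of_le h,
      ← map_sub, ← hT, map_mul, BS_X_succ_of_le h]

theorem comp_BS_succ_self (j : ℕ+) (f : MyR) :
    T j (BS (j + 1) f) = BS (j + 1) (T j f) + BS j (T (j + 1) f) :=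
  mul_left_cancel₀ (X_ne_zero j) <| by
    have h₁ : (X j : MyR) * BS (j + 1) (T j f) =
        BS (j + 1) (BS (j + 1 + 1) f) - BS j (BS (j + 1 + 1) f) := by
      rw [← hT.comp_BS_succ le_rfl, hT]
    have h₀ : (X j : MyR) * BS j (T (j + 1) f) =
        BS j (BS (j + 1 + 1) f) - BS j (BS (j + 1) f) := by
      rw [← BS_X_succ_of_le le_rfl, ← map_mul, hT, map_sub]
    rw [hT, mul_add, h₁, h₀, ← BS_BS_succ_of_le le_rfl]
    ring

theorem comm {b p : ℕ+} (h : b + 1 ≤ p) (f : MyR) : T b (T (p + 1) f) = T p (T b f) :=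
  mul_left_cancel₀ (X_ne_zero b) <| by
    have hb : b < p := lt_of_lt_of_le (PNat.lt_add_right b 1) h
    rw [hT, ← hT.comp_BS_of_le h, ← hT.comp_BS_of_le hb.le, ← hT.apply_sub, ← hT,
      hT.mul_left (BS_X_of_lt (hb.trans (PNat.lt_add_right p 1))) (BS_X_of_lt hb)]

theorem extractStep_true (j : ℕ+) (f : MyR) :
    extractStep T true j f = extractStep T false j f + (BS (j + 1) f - BS j f) := by
  simp only [extractStep, if_true, Bool.false_eq_true, if_false, add_mul, one_mul, hT j f]

theorem extractStep_comp_BS_succ (s : Bool) {j i : ℕ+} (h : j + 1 ≤ i) (f : MyR) :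
    extractStep T s j (BS (i + 1) f) = BS i (extractStep T s j f) := by
  have hj : j < i := lt_of_lt_of_le (PNat.lt_add_right j 1) h
  cases s <;> simp only [extractStep, hT.comp_BS_succ h, Bool.false_eq_true, if_true, if_false,
    map_mul, map_add, map_one, BS_X_of_lt hj]

theorem extractStep_comp_BS_of_le (s : Bool) {i j : ℕ+} (h : i ≤ j) (f : MyR) :
    extractStep T s j (BS i f) = BS i (extractStep T s (j + 1) f) := by
  cases s <;> simp only [extractStep, hT.comp_BS_of_le h, Bool.false_eq_true, if_true, if_false,
    map_mul, map_add, map_one, BS_X_succ_of_le h]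

theorem extractStep_comp_BS_succ_self (s : Bool) (j : ℕ+) (f : MyR) :
    extractStep T s j (BS (j + 1) f) =
      BS (j + 1) (extractStep T s j f) + BS j (extractStep T s (j + 1) f) := by
  cases s <;> simp only [extractStep, hT.comp_BS_succ_self, Bool.false_eq_true, if_true, if_false,
    map_mul, map_add, map_one, BS_X_of_lt (PNat.lt_add_right j 1), BS_X_succ_of_le le_rfl, mul_add]

theorem extractStep_comm (s t : Bool) {b p : ℕ+} (h : b + 1 ≤ p) (f : MyR) :
    extractStep T s b (extractStep T t (p + 1) f) = extractStep T t p (extractStep T s b f) := by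
  have hb : b < p := lt_of_lt_of_le (PNat.lt_add_right b 1) h
  have h₁ : ∀ g, T b ((1 + X (p + 1)) * g) = (1 + X p) * T b g := hT.mul_left
    (by rw [map_add, map_one, BS_X_succ_of_le h])
    (by rw [map_add, map_one, BS_X_succ_of_le ((PNat.lt_add_right b 1).le.trans h)])
  have h₀ : ∀ g, T p ((1 + X b) * g) = (1 + X b) * T p g := hT.mul_left
    (by rw [map_add, map_one, BS_X_of_lt (hb.trans (PNat.lt_add_right p 1))])
    (by rw [map_add, map_one, BS_X_of_lt hb])
  cases s <;> cases t <;> simp only [extractStep, Bool.false_eq_true, if_true, if_false,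
    hT.comm h, h₁, h₀, mul_left_comm]

end IsDividedDifference

namespace BTree

theorem mem_qdesSet_node {l r : BTree} {a q : ℕ+} :
    q ∈ (node l r).qdesSet a ↔
      (l = leaf ∧ r = leaf ∧ q = a) ∨ q ∈ l.qdesSet a ∨ q ∈ r.qdesSet (a + l.numLeaves) := by
  cases l <;> cases r <;> simp [qdesSet]

theorem le_and_succ_lt_of_mem_qdesSet {t : BTree} {a q : ℕ+} (h : q ∈ t.qdesSet a) :
    a ≤ q ∧ q + 1 < a + t.numLeaves := by
  induction t generalizing a with
  | leaf => exact absurd h (Set.notMem_empty q)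
  | node l r ihl ihr =>
    have := l.numLeaves.pos
    have := r.numLeaves.pos
    rcases mem_qdesSet_node.mp h with ⟨rfl, rfl, rfl⟩ | h | h
    · simp only [numLeaves]; pnat_to_nat; omega
    · have := ihl h; simp only [numLeaves]; pnat_to_nat; omega
    · have := ihr h; simp only [numLeaves]; pnat_to_nat; omega

theorem qdesSet_nonempty {t : BTree} (ht : t ≠ leaf) (a : ℕ+) : (t.qdesSet a).Nonempty := by
  induction t generalizing a with
  | leaf => exact absurd rfl ht
  | node l r ihl ihr =>
    by_cases hl : l = leaf
    · by_cases hr : r = leaf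
      · exact ⟨a, mem_qdesSet_node.mpr (Or.inl ⟨hl, hr, rfl⟩)⟩
      · obtain ⟨q, hq⟩ := ihr hr (a + l.numLeaves)
        exact ⟨q, mem_qdesSet_node.mpr (Or.inr (Or.inr hq))⟩
    · obtain ⟨q, hq⟩ := ihl hl a
      exact ⟨q, mem_qdesSet_node.mpr (Or.inr (Or.inl hq))⟩

theorem trim_of_notMem_range {t : BTree} {a p : ℕ+} (h : p < a ∨ a + t.numLeaves ≤ p) :
    t.trim a p = t := by
  induction t generalizing a with
  | leaf => rfl
  | node l r ihl ihr =>
    have := l.numLeaves.pos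
    have := r.numLeaves.pos
    simp only [numLeaves] at h
    rw [trim, if_neg (by rintro ⟨rfl, rfl, rfl⟩; pnat_to_nat; omega),
      ihl (by pnat_to_nat; omega), ihr (by pnat_to_nat; omega)]

theorem size_trim {t : BTree} {a q : ℕ+} (h : q ∈ t.qdesSet a) :
    (t.trim a q).size + 1 = t.size := by
  induction t generalizing a with
  | leaf => exact absurd h (Set.notMem_empty q)
  | node l r ihl ihr =>
    rcases mem_qdesSet_node.mp h with ⟨rfl, rfl, rfl⟩ | h | h
    · simp [trim, size]
    · have hq := le_and_succ_lt_of_mem_qdesSet h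
      rw [trim, if_neg (by rintro ⟨rfl, -⟩; exact absurd h (Set.notMem_empty q)),
        trim_of_notMem_range (t := r) (by left; pnat_to_nat; omega)]
      have := ihl h
      simp only [size]; omega
    · have hq := le_and_succ_lt_of_mem_qdesSet h
      rw [trim, if_neg (by rintro ⟨-, rfl, -⟩; exact absurd h (Set.notMem_empty q)),
        trim_of_notMem_range (t := l) (by right; pnat_to_nat; omega)]
      have := ihr h
      simp only [size]; omega

/-- Replace the leaf labeled `p` by a terminal node; `a` is the label of the leftmost leaf. -/
def split : BTree → ℕ+ → ℕ+ → BTree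
  | leaf, a, p => if a = p then node leaf leaf else leaf
  | node l r, a, p =>
    if p < a + l.numLeaves then node (l.split a p) r else node l (r.split (a + l.numLeaves) p)

theorem split_of_notMem_range {t : BTree} {a p : ℕ+} (h : p < a ∨ a + t.numLeaves ≤ p) :
    t.split a p = t := by
  induction t generalizing a with
  | leaf =>
    simp only [numLeaves] at h
    rw [split, if_neg (by rintro rfl; pnat_to_nat; omega)]
  | node l r ihl ihr =>
    have := l.numLeaves.pos
    have := r.numLeaves.pos
    simp only [numLeaves] at h
    rw [split]
    split_ifs
    · rw [ihl (by pnat_to_nat; omega)]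
    · rw [ihr (by pnat_to_nat; omega)]

section InRange

variable {t : BTree} {a p : ℕ+}

theorem eq_of_mem_range_leaf (ha : a ≤ p) (hp : p < a + leaf.numLeaves) : a = p := by
  simp only [numLeaves] at hp
  pnat_to_nat; omega

theorem split_leaf_of_mem_range (ha : a ≤ p) (hp : p < a + leaf.numLeaves) :
    leaf.split a p = node leaf leaf :=
  if_pos (eq_of_mem_range_leaf ha hp)

theorem split_node_left {l r : BTree} (hp : p < a + l.numLeaves) :
    (node l r).split a p = node (l.split a p) r := if_pos hp

theorem split_node_right {l r : BTree} (hp : ¬p < a + l.numLeaves) :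
    (node l r).split a p = node l (r.split (a + l.numLeaves) p) := if_neg hp

theorem split_ne_leaf (ha : a ≤ p) (hp : p < a + t.numLeaves) : t.split a p ≠ leaf := by
  cases t with
  | leaf => simp [split_leaf_of_mem_range ha hp]
  | node l r => rw [split]; split_ifs <;> simp

theorem numLeaves_split (ha : a ≤ p) (hp : p < a + t.numLeaves) :
    (t.split a p).numLeaves = t.numLeaves + 1 := by
  induction t generalizing a with
  | leaf => rw [split_leaf_of_mem_range ha hp]; rfl
  | node l r ihl ihr =>
    simp only [numLeaves] at hp
    by_cases hc : p < a + l.numLeaves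
    · rw [split_node_left hc, numLeaves, numLeaves, ihl ha hc, add_right_comm]
    · rw [split_node_right hc, numLeaves, numLeaves,
        ihr (by pnat_to_nat; omega) (by pnat_to_nat; omega), add_assoc]

theorem size_split (ha : a ≤ p) (hp : p < a + t.numLeaves) :
    (t.split a p).size = t.size + 1 := by
  induction t generalizing a with
  | leaf => rw [split_leaf_of_mem_range ha hp]; rfl
  | node l r ihl ihr =>
    simp only [numLeaves] at hp
    by_cases hc : p < a + l.numLeaves
    · rw [split_node_left hc, size, size, ihl ha hc]; ring
    · rw [split_node_right hc, size, size, ihr (by pnat_to_nat; omega) (by pnat_to_nat; omega)]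
      ring

theorem trim_split (ha : a ≤ p) (hp : p < a + t.numLeaves) : (t.split a p).trim a p = t := by
  induction t generalizing a with
  | leaf => obtain rfl := eq_of_mem_range_leaf ha hp; simp [split, trim]
  | node l r ihl ihr =>
    simp only [numLeaves] at hp
    by_cases hc : p < a + l.numLeaves
    · rw [split_node_left hc, trim, if_neg (fun h => split_ne_leaf ha hc h.1), ihl ha hc,
        trim_of_notMem_range (by left; rw [numLeaves_split ha hc]; pnat_to_nat; omega)]
    · have ha' : a + l.numLeaves ≤ p := by pnat_to_nat; omega
      have hp' : p < a + l.numLeaves + r.numLeaves := by pnat_to_nat; omega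
      rw [split_node_right hc, trim, if_neg (fun h => split_ne_leaf ha' hp' h.2.1), ihr ha' hp',
        trim_of_notMem_range (by right; exact ha')]

theorem mem_qdesSet_split (ha : a ≤ p) (hp : p < a + t.numLeaves) :
    p ∈ (t.split a p).qdesSet a := by
  induction t generalizing a with
  | leaf => obtain rfl := eq_of_mem_range_leaf ha hp; simp [split, qdesSet]
  | node l r ihl ihr =>
    simp only [numLeaves] at hp
    by_cases hc : p < a + l.numLeaves
    · rw [split_node_left hc]
      exact mem_qdesSet_node.mpr (Or.inr (Or.inl (ihl ha hc)))
    · rw [split_node_right hc]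
      exact mem_qdesSet_node.mpr
        (Or.inr (Or.inr (ihr (by pnat_to_nat; omega) (by pnat_to_nat; omega))))

theorem le_or_mem_qdesSet_of_mem_qdesSet_split (ha : a ≤ p) (hp : p < a + t.numLeaves) {q : ℕ+}
    (hq : q ∈ (t.split a p).qdesSet a) : p ≤ q ∨ (q + 1 < p ∧ q ∈ t.qdesSet a) := by
  induction t generalizing a with
  | leaf =>
    rw [split_leaf_of_mem_range ha hp] at hq
    exact Or.inl ((eq_of_mem_range_leaf ha hp).symm.trans (Set.mem_singleton_iff.mp hq).symm).le
  | node l r ihl ihr =>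
    simp only [numLeaves] at hp
    by_cases hc : p < a + l.numLeaves
    · rw [split_node_left hc] at hq
      rcases mem_qdesSet_node.mp hq with ⟨h, -⟩ | hq | hq
      · exact absurd h (split_ne_leaf ha hc)
      · exact (ihl ha hc hq).imp_right fun h => ⟨h.1, mem_qdesSet_node.mpr (Or.inr (Or.inl h.2))⟩
      · have := (le_and_succ_lt_of_mem_qdesSet hq).1
        rw [numLeaves_split ha hc] at this
        left; pnat_to_nat; omega
    · have ha' : a + l.numLeaves ≤ p := by pnat_to_nat; omega
      have hp' : p < a + l.numLeaves + r.numLeaves := by pnat_to_nat; omega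
      rw [split_node_right hc] at hq
      rcases mem_qdesSet_node.mp hq with ⟨-, h, -⟩ | hq | hq
      · exact absurd h (split_ne_leaf ha' hp')
      · have := (le_and_succ_lt_of_mem_qdesSet hq).2
        right; exact ⟨by pnat_to_nat; omega, mem_qdesSet_node.mpr (Or.inr (Or.inl hq))⟩
      · exact (ihr ha' hp' hq).imp_right fun h => ⟨h.1, mem_qdesSet_node.mpr (Or.inr (Or.inr h.2))⟩

end InRange

end BTree

namespace IndexedForest

theorem ext {F G : IndexedForest} (h : F.trees = G.trees) : F = G := by
  cases F; cases G; simp_all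

theorem eq_empty_iff {F : IndexedForest} : F = IndexedForest.empty ↔ ∀ n, F.trees n = BTree.leaf :=
  ⟨fun h _ => h ▸ rfl, fun h => ext (funext h)⟩

theorem firstLeaf_succ (F : IndexedForest) (n : ℕ) :
    F.firstLeaf (n + 1) = F.firstLeaf n + (F.trees n).numLeaves :=
  PNat.eq <| by
    rw [PNat.add_coe]
    simp only [firstLeaf, PNat.mk_coe, Finset.sum_range_succ]
    ring

theorem firstLeaf_strictMono (F : IndexedForest) : StrictMono F.firstLeaf :=
  strictMono_nat_of_lt_succ fun n => by
    rw [firstLeaf_succ]; exact PNat.lt_add_right _ _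

theorem lt_firstLeaf (F : IndexedForest) (n : ℕ) : n < (F.firstLeaf n : ℕ) := by
  induction n with
  | zero => exact PNat.pos _
  | succ n ih => rw [firstLeaf_succ, PNat.add_coe]; have := (F.trees n).numLeaves.pos; omega

theorem exists_mem_range (F : IndexedForest) (p : ℕ+) :
    ∃ n, F.firstLeaf n ≤ p ∧ p < F.firstLeaf (n + 1) := by
  classical
  have hex : ∃ n, p < F.firstLeaf (n + 1) :=
    ⟨p, by have := F.lt_firstLeaf (p + 1); pnat_to_nat; omega⟩
  refine ⟨Nat.find hex, ?_, Nat.find_spec hex⟩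
  cases h : Nat.find hex with
  | zero => exact one_le
  | succ m => exact not_lt.mp (Nat.find_min hex (h ▸ Nat.lt_succ_self m))

theorem notMem_range_of_ne {F : IndexedForest} {p : ℕ+} {n₀ n : ℕ} (h₁ : F.firstLeaf n₀ ≤ p)
    (h₂ : p < F.firstLeaf (n₀ + 1)) (hn : n ≠ n₀) :
    p < F.firstLeaf n ∨ F.firstLeaf n + (F.trees n).numLeaves ≤ p := by
  rw [← firstLeaf_succ]
  rcases hn.lt_or_gt with hn | hn
  · exact Or.inr ((F.firstLeaf_strictMono.monotone hn).trans h₁)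
  · exact Or.inl (h₂.trans_le (F.firstLeaf_strictMono.monotone hn))

theorem mem_supp {F : IndexedForest} {n : ℕ} : n ∈ F.supp ↔ F.trees n ≠ BTree.leaf :=
  Set.Finite.mem_toFinset _

theorem size_eq_sum (F : IndexedForest) {s : Finset ℕ} (hs : F.supp ⊆ s) :
    F.size = ∑ n ∈ s, (F.trees n).size :=
  Finset.sum_subset hs fun n _ hn => by rw [not_not.mp (mt mem_supp.mpr hn)]; rfl

theorem size_add_eq_of_trees_eq {F G : IndexedForest} {n₀ : ℕ}
    (h : ∀ n ≠ n₀, F.trees n = G.trees n) :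
    F.size + (G.trees n₀).size = G.size + (F.trees n₀).size := by
  classical
  set s := F.supp ∪ G.supp ∪ {n₀}
  have hn₀ : n₀ ∈ s := Finset.mem_union_right _ (Finset.mem_singleton_self n₀)
  rw [F.size_eq_sum (s := s) (fun n hn => by simp [s, hn]),
    G.size_eq_sum (s := s) (fun n hn => by simp [s, hn]),
    ← Finset.add_sum_erase s _ hn₀, ← Finset.add_sum_erase s _ hn₀,
    Finset.sum_congr rfl fun n hn => congrArg BTree.size (h n (Finset.ne_of_mem_erase hn))]
  ring

theorem ne_empty_of_mem_qdes {F : IndexedForest} {q : ℕ+} (h : q ∈ F.qdes) :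
    F ≠ IndexedForest.empty := by
  rintro rfl
  obtain ⟨n, hn⟩ := Set.mem_iUnion.mp h
  exact Set.notMem_empty q hn

theorem qdes_nonempty {F : IndexedForest} (h : F ≠ IndexedForest.empty) : F.qdes.Nonempty := by
  obtain ⟨n, hn⟩ := not_forall.mp (mt eq_empty_iff.mpr h)
  obtain ⟨q, hq⟩ := BTree.qdesSet_nonempty hn (F.firstLeaf n)
  exact ⟨q, Set.mem_iUnion.mpr ⟨n, hq⟩⟩

theorem coe_minQDes {F : IndexedForest} (h : F ≠ IndexedForest.empty) :
    (F.minQDes : ℕ) = sInf ((fun i : ℕ+ => (i : ℕ)) '' F.qdes) := by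
  rw [minQDes]
  exact congrArg Subtype.val (dif_pos ((qdes_nonempty h).image _))

theorem minQDes_mem {F : IndexedForest} (h : F ≠ IndexedForest.empty) : F.minQDes ∈ F.qdes := by
  obtain ⟨q, hq, hq'⟩ := Nat.sInf_mem ((qdes_nonempty h).image (fun i : ℕ+ => (i : ℕ)))
  rwa [← PNat.coe_inj.mp (hq'.trans (coe_minQDes h).symm)]

theorem minQDes_le {F : IndexedForest} {q : ℕ+} (hq : q ∈ F.qdes) : F.minQDes ≤ q := by
  rw [← PNat.coe_le_coe, coe_minQDes (ne_empty_of_mem_qdes hq)]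
  exact Nat.sInf_le ⟨q, hq, rfl⟩

theorem minQDes_eq {F : IndexedForest} {p : ℕ+} (hp : p ∈ F.qdes) (hmin : ∀ q ∈ F.qdes, p ≤ q) :
    F.minQDes = p :=
  le_antisymm (minQDes_le hp) (hmin _ (minQDes_mem (ne_empty_of_mem_qdes hp)))

theorem size_trim {F : IndexedForest} {j : ℕ+} (hj : j ∈ F.qdes) :
    (F.trim j).size + 1 = F.size := by
  obtain ⟨n₀, hn₀⟩ := Set.mem_iUnion.mp hj
  have hj' := BTree.le_and_succ_lt_of_mem_qdesSet hn₀
  have h₂ : j < F.firstLeaf (n₀ + 1) := by rw [firstLeaf_succ]; pnat_to_nat; omega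
  have := size_add_eq_of_trees_eq (F := F.trim j) (G := F) (n₀ := n₀) fun n hn =>
    BTree.trim_of_notMem_range (notMem_range_of_ne hj'.1 h₂ hn)
  have := BTree.size_trim hn₀
  simp only [trim] at *
  omega

def split (G : IndexedForest) (p : ℕ+) : IndexedForest where
  trees n := (G.trees n).split (G.firstLeaf n) p
  finite := by
    refine (G.finite.union ((Set.finite_singleton p).preimage
      G.firstLeaf_strictMono.injective.injOn)).subset fun n hn => ?_
    by_contra h
    simp only [Set.mem_union, Set.mem_ofPred_eq, not_or, not_not, Set.mem_preimage,
      Set.mem_singleton_iff] at h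
    exact hn (by rw [h.1, BTree.split, if_neg h.2])

section InRange

variable {G : IndexedForest} {p : ℕ+} {n₀ : ℕ} (h₁ : G.firstLeaf n₀ ≤ p)
  (h₂ : p < G.firstLeaf (n₀ + 1))
include h₁ h₂

theorem split_trees_of_ne {n : ℕ} (hn : n ≠ n₀) : (G.split p).trees n = G.trees n :=
  BTree.split_of_notMem_range (notMem_range_of_ne h₁ h₂ hn)

theorem firstLeaf_split_of_le {n : ℕ} (hn : n ≤ n₀) : (G.split p).firstLeaf n = G.firstLeaf n := by
  induction n with
  | zero => rfl
  | succ n ih =>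
    rw [firstLeaf_succ, firstLeaf_succ, ih (by omega), split_trees_of_ne h₁ h₂ (by omega)]

theorem firstLeaf_split_of_lt {n : ℕ} (hn : n₀ < n) :
    (G.split p).firstLeaf n = G.firstLeaf n + 1 := by
  induction n, hn using Nat.le_induction with
  | base =>
    rw [firstLeaf_succ, firstLeaf_succ, firstLeaf_split_of_le h₁ h₂ le_rfl]
    rw [firstLeaf_succ] at h₂
    show _ + ((G.trees n₀).split _ p).numLeaves = _
    rw [BTree.numLeaves_split h₁ h₂, add_assoc]
  | succ n hn ih =>
    rw [firstLeaf_succ, firstLeaf_succ, ih, split_trees_of_ne h₁ h₂ (by omega), add_right_comm]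

theorem trim_split_of_mem_range : (G.split p).trim p = G := by
  refine ext (funext fun n => ?_)
  show ((G.split p).trees n).trim ((G.split p).firstLeaf n) p = G.trees n
  rcases lt_trichotomy n n₀ with hn | rfl | hn
  · rw [firstLeaf_split_of_le h₁ h₂ hn.le, split_trees_of_ne h₁ h₂ hn.ne]
    exact BTree.trim_of_notMem_range (notMem_range_of_ne h₁ h₂ hn.ne)
  · rw [firstLeaf_split_of_le h₁ h₂ le_rfl]
    exact BTree.trim_split h₁ (firstLeaf_succ G n ▸ h₂)
  · have := G.firstLeaf_strictMono.monotone (show n₀ + 1 ≤ n by omega)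
    rw [firstLeaf_split_of_lt h₁ h₂ hn, split_trees_of_ne h₁ h₂ hn.ne']
    exact BTree.trim_of_notMem_range (Or.inl (by pnat_to_nat; omega))

theorem mem_qdes_split_of_mem_range : p ∈ (G.split p).qdes :=
  Set.mem_iUnion.mpr ⟨n₀, by
    rw [firstLeaf_split_of_le h₁ h₂ le_rfl]
    exact BTree.mem_qdesSet_split h₁ (firstLeaf_succ G n₀ ▸ h₂)⟩

theorem le_of_mem_qdes_split_of_mem_range (hG : ∀ q ∈ G.qdes, p ≤ q + 1) {q : ℕ+}
    (hq : q ∈ (G.split p).qdes) : p ≤ q := by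
  obtain ⟨n, hn⟩ := Set.mem_iUnion.mp hq
  rcases lt_trichotomy n n₀ with hlt | rfl | hgt
  · rw [firstLeaf_split_of_le h₁ h₂ hlt.le, split_trees_of_ne h₁ h₂ hlt.ne] at hn
    have hq' := (BTree.le_and_succ_lt_of_mem_qdesSet hn).2
    have := (G.firstLeaf_strictMono.monotone (show n + 1 ≤ n₀ by omega)).trans h₁
    have := hG q (Set.mem_iUnion.mpr ⟨n, hn⟩)
    rw [← firstLeaf_succ] at hq'
    pnat_to_nat; omega
  · rw [firstLeaf_split_of_le h₁ h₂ le_rfl] at hn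
    refine (BTree.le_or_mem_qdesSet_of_mem_qdesSet_split h₁ (firstLeaf_succ G n ▸ h₂)
      hn).resolve_right fun ⟨hlt, hmem⟩ => ?_
    have := hG q (Set.mem_iUnion.mpr ⟨n, hmem⟩)
    pnat_to_nat; omega
  · rw [firstLeaf_split_of_lt h₁ h₂ hgt] at hn
    have hq' := (BTree.le_and_succ_lt_of_mem_qdesSet hn).1
    have := G.firstLeaf_strictMono.monotone (show n₀ + 1 ≤ n by omega)
    pnat_to_nat; omega

theorem size_split_of_mem_range : (G.split p).size = G.size + 1 := by
  have := size_add_eq_of_trees_eq (F := G.split p) (G := G) (n₀ := n₀) fun n hn =>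
    split_trees_of_ne h₁ h₂ hn
  have := BTree.size_split h₁ (firstLeaf_succ G n₀ ▸ h₂)
  simp only [split] at *
  omega

end InRange

theorem trim_split (G : IndexedForest) (p : ℕ+) : (G.split p).trim p = G :=
  have ⟨_, h₁, h₂⟩ := G.exists_mem_range p
  trim_split_of_mem_range h₁ h₂

theorem size_split (G : IndexedForest) (p : ℕ+) : (G.split p).size = G.size + 1 :=
  have ⟨_, h₁, h₂⟩ := G.exists_mem_range p
  size_split_of_mem_range h₁ h₂

theorem mem_qdes_split (G : IndexedForest) (p : ℕ+) : p ∈ (G.split p).qdes :=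
  have ⟨_, h₁, h₂⟩ := G.exists_mem_range p
  mem_qdes_split_of_mem_range h₁ h₂

theorem minQDes_split {G : IndexedForest} {p : ℕ+} (hG : ∀ q ∈ G.qdes, p ≤ q + 1) :
    (G.split p).minQDes = p :=
  have ⟨_, h₁, h₂⟩ := G.exists_mem_range p
  minQDes_eq (mem_qdes_split_of_mem_range h₁ h₂) fun _ => le_of_mem_qdes_split_of_mem_range h₁ h₂ hG

end IndexedForest

open IndexedForest

theorem extract_empty (T : ℕ+ → MyR → MyR) (β : ℤ) (f : MyR) :
    extract T β IndexedForest.empty f = f := by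
  unfold extract
  cases IndexedForest.empty.size with
  | zero => rfl
  | succ k => rw [extractAux, if_pos rfl]

theorem exists_extract_eq_extract_trim (T : ℕ+ → MyR → MyR) {F : IndexedForest}
    (hF : F ≠ IndexedForest.empty) : ∃ s : Bool, ∀ f,
      extract T 1 F f = extract T 1 (F.trim F.minQDes) (extractStep T s F.minQDes f) := by
  classical
  have hsize := size_trim (minQDes_mem hF)
  refine ⟨decide (F.rightAt F.minQDes), fun f => ?_⟩
  unfold extract
  rw [← hsize, extractAux, if_neg hF]
  by_cases hr : F.rightAt F.minQDes <;> simp [hr, extractStep]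

noncomputable def extractSpan (T : ℕ+ → MyR → MyR) (n : ℕ) : Submodule ℤ (MyR → MyR) :=
  Submodule.span ℤ {φ | ∃ (w : List ℕ+) (G : IndexedForest), G.size ≤ n ∧
    φ = fun f => w.foldr (fun j g => BS j g) (extract T 1 G f)}

section ExtractSpan

variable {T : ℕ+ → MyR → MyR}

theorem extractSpan_mono {n m : ℕ} (h : n ≤ m) : extractSpan T n ≤ extractSpan T m :=
  Submodule.span_mono fun _ ⟨w, G, hG, e⟩ => ⟨w, G, hG.trans h, e⟩

theorem extract_mem_extractSpan (G : IndexedForest) : extract T 1 G ∈ extractSpan T G.size :=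
  Submodule.subset_span ⟨[], G, le_rfl, rfl⟩

theorem BS_comp_mem_extractSpan {n : ℕ} {φ : MyR → MyR} (hφ : φ ∈ extractSpan T n) (j : ℕ+) :
    (fun f => BS j (φ f)) ∈ extractSpan T n := by
  have : extractSpan T n ≤ (extractSpan T n).comap (LinearMap.compLeft (BS j).toLinearMap MyR) :=
    Submodule.span_le.mpr fun _ ⟨w, G, hG, e⟩ =>
      Submodule.subset_span ⟨j :: w, G, hG, by subst e; rfl⟩
  exact this hφ

theorem comp_mem_extractSpan {n m : ℕ} {φ : MyR → MyR} (hφ : φ ∈ extractSpan T n) {ψ : MyR → MyR}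
    (hψ : ∀ G : IndexedForest, G.size ≤ n → (fun f => extract T 1 G (ψ f)) ∈ extractSpan T m) :
    (fun f => φ (ψ f)) ∈ extractSpan T m := by
  have : extractSpan T n ≤ (extractSpan T m).comap (LinearMap.funLeft ℤ MyR ψ) :=
    Submodule.span_le.mpr fun _ hφ => by
      obtain ⟨w, G, hG, rfl⟩ := hφ
      show (fun f => w.foldr (fun j g => BS j g) (extract T 1 G (ψ f))) ∈ extractSpan T m
      induction w with
      | nil => exact hψ G hG
      | cons j w ih => exact BS_comp_mem_extractSpan ih j
  exact this hφ

end ExtractSpan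

namespace IsDividedDifference

variable {T : ℕ+ → MyR → MyR} (hT : IsDividedDifference T)
include hT

theorem extract_add (F : IndexedForest) (f g : MyR) :
    extract T 1 F (f + g) = extract T 1 F f + extract T 1 F g := by
  unfold extract
  generalize F.size = k
  induction k generalizing F f g with
  | zero => rfl
  | succ k ih =>
    simp only [extractAux]
    split_ifs
    · rfl
    · rw [← ih, hT.apply_add, mul_add]
    · rw [← ih, hT.apply_add]

theorem extract_sub (F : IndexedForest) (f g : MyR) :
    extract T 1 F (f - g) = extract T 1 F f - extract T 1 F g :=
  eq_sub_of_add_eq <| by rw [← hT.extract_add, sub_add_cancel]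

theorem extract_comp_extractStep_mem_iff {M : Submodule ℤ (MyR → MyR)} {G : IndexedForest}
    {p : ℕ+} (h₁ : (fun f => extract T 1 G (BS (p + 1) f)) ∈ M)
    (h₀ : (fun f => extract T 1 G (BS p f)) ∈ M) (s s' : Bool) :
    (fun f => extract T 1 G (extractStep T s p f)) ∈ M ↔
      (fun f => extract T 1 G (extractStep T s' p f)) ∈ M := by
  have key : ∀ s, (fun f => extract T 1 G (extractStep T s p f)) ∈ M ↔
      (fun f => extract T 1 G (extractStep T false p f)) ∈ M := by
    rintro (_ | _)
    · rfl
    · have : (fun f => extract T 1 G (extractStep T true p f)) =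
          (fun f => extract T 1 G (extractStep T false p f)) +
            ((fun f => extract T 1 G (BS (p + 1) f)) - fun f => extract T 1 G (BS p f)) :=
        funext fun f => by simp [hT.extractStep_true, hT.extract_add, hT.extract_sub]
      rw [this]
      exact M.add_mem_iff_left (M.sub_mem h₁ h₀)
  rw [key s, key s']

theorem extract_comp_extractStep_mem {n : ℕ}
    (hB : ∀ (F : IndexedForest) (i : ℕ+), F.size ≤ n →
      (fun f => extract T 1 F (BS i f)) ∈ extractSpan T F.size)
    (p : ℕ+) (G : IndexedForest) (s : Bool) (hG : G.size ≤ n) :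
    (fun f => extract T 1 G (extractStep T s p f)) ∈ extractSpan T (G.size + 1) := by
  induction p using PNat.strongInductionOn generalizing G s with
  | _ p ih =>
  by_cases hinv : ∃ q ∈ G.qdes, q + 1 < p
  · obtain ⟨q, hq, hqp⟩ := hinv
    have hne := ne_empty_of_mem_qdes hq
    have hb := minQDes_le hq
    have hsize := size_trim (minQDes_mem hne)
    obtain ⟨sb, hsb⟩ := exists_extract_eq_extract_trim T hne
    obtain ⟨p₀, rfl⟩ := PNat.exists_eq_succ_of_ne_one (by pnat_to_nat; omega : 1 < p).ne'
    have hbp : G.minQDes + 1 ≤ p₀ := by pnat_to_nat; omega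
    have hcomm : (fun f => extract T 1 G (extractStep T s (p₀ + 1) f)) = fun f =>
        extract T 1 (G.trim G.minQDes) (extractStep T s p₀ (extractStep T sb G.minQDes f)) :=
      funext fun f => by rw [hsb, hT.extractStep_comm sb s hbp]
    rw [hcomm]
    refine comp_mem_extractSpan (n := G.size)
      (φ := fun f => extract T 1 (G.trim G.minQDes) (extractStep T s p₀ f)) ?_ fun K hK =>
      extractSpan_mono (Nat.succ_le_succ hK)
        (ih G.minQDes (by pnat_to_nat; omega) K sb (hK.trans hG))
    simpa only [hsize] using ih p₀ (PNat.lt_add_right p₀ 1) (G.trim G.minQDes) s (by omega)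
  · have hval : ∀ q ∈ G.qdes, p ≤ q + 1 := fun q hq => not_lt.mp fun h => hinv ⟨q, hq, h⟩
    obtain ⟨s', hs'⟩ := exists_extract_eq_extract_trim T
      (ne_empty_of_mem_qdes (G.mem_qdes_split p))
    simp only [minQDes_split hval, trim_split] at hs'
    have hmem := extract_mem_extractSpan (T := T) (G.split p)
    rw [size_split, funext hs'] at hmem
    exact (hT.extract_comp_extractStep_mem_iff (extractSpan_mono (Nat.le_succ _) (hB G _ hG))
      (extractSpan_mono (Nat.le_succ _) (hB G _ hG)) s s').mpr hmem

theorem extract_comp_BS_mem (F : IndexedForest) (i : ℕ+) :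
    (fun f => extract T 1 F (BS i f)) ∈ extractSpan T F.size := by
  induction hn : F.size using Nat.strong_induction_on generalizing F i with
  | _ n ih =>
  subst hn
  by_cases hF : F = IndexedForest.empty
  · subst hF
    exact Submodule.subset_span ⟨[i], _, le_rfl, funext fun f => by simp [extract_empty]⟩
  obtain ⟨s, hs⟩ := exists_extract_eq_extract_trim T hF
  have hsize := size_trim (minQDes_mem hF)
  set j := F.minQDes
  have step (k j' : ℕ+) :
      (fun f => extract T 1 (F.trim j) (BS k (extractStep T s j' f))) ∈ extractSpan T F.size :=
    comp_mem_extractSpan (ih _ (by omega) _ k rfl) fun K hK =>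
      extractSpan_mono (by omega) (hT.extract_comp_extractStep_mem
        (fun F' i' hF' => ih _ (by omega) F' i' rfl) j' K s hK)
  rcases lt_trichotomy (j + 1) i with h | rfl | h
  · obtain ⟨i₀, rfl⟩ := PNat.exists_eq_succ_of_ne_one (by pnat_to_nat; omega : 1 < i).ne'
    simpa only [hs, hT.extractStep_comp_BS_succ s (show j + 1 ≤ i₀ by pnat_to_nat; omega)]
      using step i₀ j
  · simpa only [hs, hT.extractStep_comp_BS_succ_self, hT.extract_add, Pi.add_def] using
      add_mem (step (j + 1) j) (step j (j + 1))
  · simpa only [hs, hT.extractStep_comp_BS_of_le s (show i ≤ j by pnat_to_nat; omega)]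
      using step i (j + 1)

end IsDividedDifference

theorem constantCoeff_foldr_BS (w : List ℕ+) (g : MyR) :
    constantCoeff (w.foldr (fun j g => BS j g) g) = constantCoeff g := by
  induction w with
  | nil => rfl
  | cons j w ih => rw [List.foldr_cons, constantCoeff_BS, ih]

/-- β = 1: any `Ĥ_F ∘ R_i` can be rewritten as a `ℤ`-linear
combination of operators `R_(w(1)) ∘ ⋯ ∘ R_(w(t)) ∘ Ĥ_G`; in particular
`ct ∘ Ĥ_F ∘ R_i` is a `ℤ`-linear combination of the `ct ∘ Ĥ_G`. -/
theorem stmt9 (T : ℕ+ → MyR → MyR)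
    (hT : ∀ (i : ℕ+) (f : MyR), (X i : MyR) * T i f = BS (i + 1) f - BS i f)
    (F : IndexedForest) (i : ℕ+) :
    ∃ (N : ℕ) (c : Fin N → ℤ) (w : Fin N → List ℕ+) (G : Fin N → IndexedForest),
      (∀ f : MyR, extract T 1 F (BS i f) =
        ∑ m : Fin N, c m • (w m).foldr (fun j g => BS j g)
          (extract T 1 (G m) f)) ∧
      (∀ f : MyR, constantCoeff (extract T 1 F (BS i f)) =
        ∑ m : Fin N, c m * constantCoeff (extract T 1 (G m) f)) := by
  obtain ⟨N, c, φ, hφ⟩ :=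
    Submodule.mem_span_set'.mp (IsDividedDifference.extract_comp_BS_mem hT F i)
  choose w G _ hφ' using fun m => (φ m).2
  have hsum (f : MyR) : extract T 1 F (BS i f) =
      ∑ m, c m • (w m).foldr (fun j g => BS j g) (extract T 1 (G m) f) := by
    rw [← congrFun hφ f, Finset.sum_apply]
    exact Finset.sum_congr rfl fun m _ => by rw [Pi.smul_apply, hφ' m]
  refine ⟨N, c, w, G, hsum, fun f => ?_⟩
  simp only [hsum f, map_sum, map_zsmul, constantCoeff_foldr_BS, smul_eq_mul]
end

section
/- Set β = 1. For every i ≥ 1, every operator Ĥ ∈ {Ĥ^L_i, Ĥ^R_i}, and all f, g ∈ R, the Leibniz identity holds: Ĥ(f·g) = Ĥ(f) · R_i(g) + R_{i+1}(f) · Ĥ(g). -/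
open MvPolynomial

/-- β = 1: the Leibniz identity
`Ĥ(f·g) = Ĥ(f)·R_i(g) + R_(i+1)(f)·Ĥ(g)` for `Ĥ ∈ {Ĥ^L_i, Ĥ^R_i}`. -/
theorem stmt14 (T : ℕ+ → MyR → MyR)
    (hT : ∀ (i : ℕ+) (f : MyR), (X i : MyR) * T i f = BS (i + 1) f - BS i f)
    (i : ℕ+) (f g : MyR) :
    (T i (f * g) = T i f * BS i g + BS (i + 1) f * T i g) ∧
    ((1 + X i) * T i (f * g) =
      ((1 + X i) * T i f) * BS i g + BS (i + 1) f * ((1 + X i) * T i g)) := by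
  have hfg : BS (i + 1) (f * g) = BS (i + 1) f * BS (i + 1) g := map_mul _ _ _
  have hfg' : BS i (f * g) = BS i f * BS i g := map_mul _ _ _
  have h1 : (X i : MyR) * T i (f * g) =
      (X i : MyR) * (T i f * BS i g + BS (i + 1) f * T i g) := by
    linear_combination hT i (f * g) + hfg - hfg' - BS i g * hT i f -
      BS (i + 1) f * hT i g
  have key := mul_left_cancel₀ (X_ne_zero (R := ℤ) i) h1
  exact ⟨key, by linear_combination (1 + (X i : MyR)) * key⟩
end
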